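/- Let θ > 0 and let ν be a probability measure on (Fin d → ℝ) concentrated on vectors with strictly positive coordinates. Let μ be the negative-binomial (Gamma–Poisson) compound of ν with scale θ on (Fin d → ℕ). Then for every t : Fin d → ℂ with (t j).re ≤ 0 for all j, one has ∫ exp(∑ j, t j · (x j : ℂ)) dμ(x) = ∫ ∏ j, (1 − θ·(exp(t j) − 1)) ^ (−(y j : ℂ)) dν(y), where the complex power with base b and exponent w is exp(w · log b) with log the principal branch of the complex logarithm. -/

import Mathlib

open MeasureTheory ProbabilityTheory

/-- Negative-binomial (Gamma–Poisson) compound with scale `θ` of a measure `ν` on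
`Fin d → ℝ`: conditionally on `y ~ ν`, draw independent `u j ~ Gamma(shape = y j,
rate = θ⁻¹)`, then independent Poisson variables with rates `u j`. -/
noncomputable def negBinCompound (d : ℕ) (θ : ℝ) (ν : Measure (Fin d → ℝ)) :
    Measure (Fin d → ℕ) :=
  ν.bind (fun y => (Measure.pi fun j => gammaMeasure (y j) θ⁻¹).bind
    (fun u => Measure.pi fun j => (poissonPMF (Real.toNNReal (u j))).toMeasure))

/-!
Conditionally on the shapes `y`, the coordinates are independent Gamma–Poisson mixtures, so the
Laplace transform factorises. A Poisson variable of rate `u` has transform `exp (u (e^t - 1))`, and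
the Gamma transform `(1 - z / r) ^ (-a)` is computed for real `z < r` from the Gamma integral and
extended to the half-plane `re z < r` by analytic continuation of the complex moment generating
function. The remaining point is measurability of the conditional law in `y`: it is read off from
its singleton masses after clamping the shapes to be positive, which changes nothing `ν`-a.e.
-/

open scoped NNReal ENNReal

open Set

lemma Real.measurable_Gamma : Measurable Real.Gamma := by
  refine measurable_of_countable_not_continuousAt
    ((countable_range fun n : ℕ => -(n : ℝ)).mono fun s hs => ?_)
  by_contra h
  exact hs (Real.differentiableAt_Gamma fun m hm => h ⟨m, hm.symm⟩).continuousAt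

namespace MeasureTheory

lemma Measure.measurable_of_measurable_singleton {α β : Type*} [MeasurableSpace α]
    [MeasurableSpace β] [Countable β] [MeasurableSingletonClass β] {κ : α → Measure β}
    (h : ∀ b, Measurable fun a => κ a {b}) : Measurable κ := by
  refine Measure.measurable_of_measurable_coe _ fun s _ => ?_
  have hsum (a : α) : κ a s = ∑' b : s, κ a {(b : β)} :=
    (tsum_measure_preimage_singleton s.to_countable fun _ _ => measurableSet_singleton _).symm
  simp_rw [hsum]
  exact .tsum fun b => h b

lemma Measure.integral_comp {α β E : Type*} [MeasurableSpace α] [MeasurableSpace β]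
    [NormedAddCommGroup E] [NormedSpace ℝ E] {μ : Measure α} (κ : Kernel α β) {f : β → E}
    (hf : Integrable f (κ ∘ₘ μ)) :
    ∫ b, f b ∂(κ ∘ₘ μ) = ∫ a, ∫ b, f b ∂κ a ∂μ := by
  rw [Measure.comp_eq_comp_const_apply] at hf ⊢
  exact Kernel.integral_comp hf

lemma lintegral_pi_prod_eq_prod {ι : Type*} [Fintype ι] {E : ι → Type*}
    [∀ i, MeasurableSpace (E i)] (μ : ∀ i, Measure (E i)) [∀ i, IsProbabilityMeasure (μ i)]
    {f : ∀ i, E i → ℝ≥0∞} (hf : ∀ i, Measurable (f i)) :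
    ∫⁻ x, ∏ i, f i (x i) ∂Measure.pi μ = ∏ i, ∫⁻ v, f i v ∂μ i := by
  rw [lintegral_prod_eq_prod_lintegral_of_indepFun _ _
    (iIndepFun_pi fun i => (hf i).aemeasurable) fun i => (hf i).comp (measurable_pi_apply i)]
  exact Finset.prod_congr rfl fun i _ => (measurePreserving_eval μ i).lintegral_comp (hf i)

end MeasureTheory

namespace ProbabilityTheory

section Poisson

set_option linter.deprecated false in
lemma toMeasure_poissonPMF (r : ℝ≥0) : (poissonPMF r).toMeasure = poissonMeasure r :=
  Measure.ext_of_singleton fun n => by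
    rw [PMF.toMeasure_apply_singleton _ _ (measurableSet_singleton n), poissonMeasure_singleton,
      ← poissonPMFReal_ofReal_eq_poissonPMF, poissonPMFReal]

lemma measurable_poissonMeasure_toNNReal_singleton (n : ℕ) :
    Measurable fun v : ℝ => poissonMeasure v.toNNReal {n} := by
  simp_rw [poissonMeasure_singleton]
  fun_prop

open Complex in
lemma integral_cexp_mul_poissonMeasure (r : ℝ≥0) (t : ℂ) :
    ∫ n, cexp (t * n) ∂poissonMeasure r = cexp ((cexp t - 1) * r) := by
  rw [integral_poissonMeasure]
  calc ∑' n : ℕ, (Real.exp (-r) * r ^ n / n.factorial) • cexp (t * n)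
      = ∑' n : ℕ, Real.exp (-r) * ((r * cexp t) ^ n / n.factorial) := by
        refine tsum_congr fun n => ?_
        rw [Complex.real_smul, mul_comm t, Complex.exp_nat_mul]
        push_cast
        ring
    _ = Real.exp (-r) * cexp (r * cexp t) := by
        rw [tsum_mul_left, Complex.exp_eq_exp_ℂ, NormedSpace.exp_eq_tsum_div]
    _ = cexp ((cexp t - 1) * r) := by
        rw [Complex.ofReal_exp, ← Complex.exp_add]
        push_cast
        ring_nf

variable {ι : Type*} [Fintype ι]

noncomputable def poissonPiKernel : Kernel (ι → ℝ) (ι → ℕ) where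
  toFun u := Measure.pi fun j => poissonMeasure (u j).toNNReal
  measurable' := Measure.measurable_of_measurable_singleton fun x => by
    simp_rw [Measure.pi_singleton]
    exact Finset.measurable_prod _ fun j _ =>
      (measurable_poissonMeasure_toNNReal_singleton (x j)).comp (measurable_pi_apply j)

lemma poissonPiKernel_apply (u : ι → ℝ) :
    poissonPiKernel u = Measure.pi fun j => poissonMeasure (u j).toNNReal := rfl

instance : IsMarkovKernel (poissonPiKernel (ι := ι)) :=
  ⟨fun u => by rw [poissonPiKernel_apply]; infer_instance⟩

end Poisson

section Gamma

lemma measurable_gammaPDF_uncurry (r : ℝ) :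
    Measurable fun p : ℝ × ℝ => gammaPDF p.1 r p.2 := by
  have := Real.measurable_Gamma
  exact (Measurable.ite (measurableSet_le measurable_const measurable_snd) (by fun_prop)
    measurable_const).ennreal_ofReal

variable {a r : ℝ}

lemma ae_nonneg_gammaMeasure : ∀ᵐ v ∂gammaMeasure a r, 0 ≤ v := by
  simp only [ae_iff, not_le, gammaMeasure]
  rw [show {v : ℝ | v < 0} = Iio 0 from rfl, withDensity_apply _ measurableSet_Iio]
  exact lintegral_gammaPDF_of_nonpos le_rfl

lemma mgf_gammaMeasure (ha : 0 < a) (hr : 0 < r) {s : ℝ} (hs : s < r) :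
    mgf id (gammaMeasure a r) s = (1 - s / r) ^ (-a) := by
  have hrs : 0 < r - s := sub_pos.2 hs
  rw [mgf, gammaMeasure, integral_withDensity_eq_integral_toReal_smul
    (f := gammaPDF a r) (measurable_gammaPDFReal a r).ennreal_ofReal
    (ae_of_all _ fun _ => ENNReal.ofReal_lt_top)]
  simp_rw [gammaPDF, ENNReal.toReal_ofReal (gammaPDFReal_nonneg ha hr _), smul_eq_mul, id]
  rw [← setIntegral_eq_integral_of_forall_compl_eq_zero (s := Ici 0) fun v hv => by
      rw [gammaPDFReal, if_neg (by simpa using hv), zero_mul], integral_Ici_eq_integral_Ioi,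
    setIntegral_congr_fun measurableSet_Ioi (g := fun v =>
      r ^ a / Real.Gamma a * (v ^ (a - 1) * Real.exp (-((r - s) * v)))) fun v hv => by
        rw [gammaPDFReal, if_pos (le_of_lt (mem_Ioi.1 hv)), mul_assoc, mul_assoc,
          ← Real.exp_add]
        dsimp only
        ring_nf,
    integral_const_mul, Real.integral_rpow_mul_exp_neg_mul_Ioi ha hrs]
  have hΓ : Real.Gamma a ≠ 0 := (Real.Gamma_pos_of_pos ha).ne'
  rw [show 1 - s / r = (r - s) / r by field_simp, Real.rpow_neg (div_nonneg hrs.le hr.le),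
    Real.div_rpow hrs.le hr.le, Real.div_rpow zero_le_one hrs.le, Real.one_rpow]
  field_simp

lemma Iio_subset_integrableExpSet_gammaMeasure (ha : 0 < a) (hr : 0 < r) :
    Iio r ⊆ integrableExpSet id (gammaMeasure a r) := fun s hs => by_contra fun h =>
  (Real.rpow_pos_of_pos (by rw [sub_pos, div_lt_one hr]; exact hs) _).ne'
    ((mgf_gammaMeasure ha hr hs).symm.trans (integral_undef h))

lemma eqOn_complexMGF_of_eqOn_mgf {Ω : Type*} [MeasurableSpace Ω] {X : Ω → ℝ} {μ : Measure Ω}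
    {I : Set ℝ} (hIo : IsOpen I) (hIc : Convex ℝ I) (hI : I ⊆ integrableExpSet X μ) {g : ℂ → ℂ}
    (hg : AnalyticOnNhd ℂ g {z | z.re ∈ I}) (hmgf : ∀ s ∈ I, mgf X μ s = g s) :
    EqOn (complexMGF X μ) g {z | z.re ∈ I} := by
  rcases I.eq_empty_or_nonempty with rfl | ⟨s₀, hs₀⟩
  · simp [EqOn]
  have hF : AnalyticOnNhd ℂ (complexMGF X μ) {z | z.re ∈ I} :=
    analyticOnNhd_complexMGF.mono fun z hz => interior_maximal hI hIo hz
  have h_real : ∀ᶠ s : ℝ in nhdsWithin s₀ {s₀}ᶜ, complexMGF X μ s = g s :=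
    eventually_nhdsWithin_of_eventually_nhds <|
      Filter.eventually_of_mem (hIo.mem_nhds hs₀) fun s hs => by rw [complexMGF_ofReal, hmgf s hs]
  have h_ofReal : Filter.Tendsto ((↑) : ℝ → ℂ) (nhdsWithin s₀ {s₀}ᶜ)
      (nhdsWithin (s₀ : ℂ) {(s₀ : ℂ)}ᶜ) :=
    tendsto_nhdsWithin_of_tendsto_nhds_of_eventually_within _
      (Complex.continuous_ofReal.tendsto s₀ |>.mono_left nhdsWithin_le_nhds)
      (eventually_nhdsWithin_of_forall fun s hs => by simpa using hs)
  exact hF.eqOn_of_preconnected_of_frequently_eq hg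
    (hIc.linear_preimage Complex.reLm).isPreconnected (z₀ := (s₀ : ℂ)) (by simpa using hs₀)
    (h_ofReal.frequently (p := fun z => complexMGF X μ z = g z) h_real.frequently)

open Complex in
lemma complexMGF_gammaMeasure (ha : 0 < a) (hr : 0 < r) {z : ℂ} (hz : z.re < r) :
    complexMGF id (gammaMeasure a r) z = cexp (-a * log (1 - z / r)) := by
  refine eqOn_complexMGF_of_eqOn_mgf (g := fun z => cexp (-a * log (1 - z / r))) isOpen_Iio
    (convex_Iio r) (Iio_subset_integrableExpSet_gammaMeasure ha hr) ?_ (fun s hs => ?_) hz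
  · refine DifferentiableOn.analyticOnNhd (fun w hw => ?_) (isOpen_Iio.preimage continuous_re)
    have hw' : 1 - w / r ∈ slitPlane := Or.inl <| by
      rw [sub_re, one_re, div_ofReal_re, sub_pos, div_lt_one hr]; exact hw
    exact (((by fun_prop : DifferentiableAt ℂ (fun z : ℂ => 1 - z / r) w).clog hw').const_mul
      _).cexp.differentiableWithinAt
  · have hpos : 0 < 1 - s / r := by rw [sub_pos, div_lt_one hr]; exact hs
    rw [mgf_gammaMeasure ha hr hs,
      show (1 - (s : ℂ) / r) = ((1 - s / r : ℝ) : ℂ) by push_cast; ring, ← ofReal_log hpos.le,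
      Real.rpow_def_of_pos hpos]
    push_cast
    ring_nf

end Gamma

section NegativeBinomial

variable {ι : Type*} [Fintype ι] {θ : ℝ}

noncomputable def gammaPoisson (θ : ℝ) (y : ι → ℝ) : Measure (ι → ℕ) :=
  poissonPiKernel ∘ₘ Measure.pi fun j => gammaMeasure (y j) θ⁻¹

lemma negBinCompound_eq_bind_gammaPoisson (d : ℕ) (θ : ℝ) (ν : Measure (Fin d → ℝ)) :
    negBinCompound d θ ν = ν.bind (gammaPoisson θ) := by
  simp_rw [negBinCompound, toMeasure_poissonPMF]
  rfl

lemma isProbabilityMeasure_gammaPoisson (hθ : 0 < θ) {y : ι → ℝ} (hy : ∀ j, 0 < y j) :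
    IsProbabilityMeasure (gammaPoisson θ y) :=
  have := fun j => isProbabilityMeasure_gammaMeasure (hy j) (inv_pos.2 hθ)
  inferInstanceAs (IsProbabilityMeasure (poissonPiKernel ∘ₘ _))

lemma gammaPoisson_singleton (hθ : 0 < θ) {y : ι → ℝ} (hy : ∀ j, 0 < y j) (x : ι → ℕ) :
    gammaPoisson θ y {x} =
      ∏ j, ∫⁻ v, gammaPDF (y j) θ⁻¹ v * poissonMeasure v.toNNReal {x j} := by
  have := fun j => isProbabilityMeasure_gammaMeasure (hy j) (inv_pos.2 hθ)
  rw [gammaPoisson, Measure.bind_apply (measurableSet_singleton x) (Kernel.aemeasurable _)]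
  simp_rw [poissonPiKernel_apply, Measure.pi_singleton]
  rw [lintegral_pi_prod_eq_prod _ fun j => measurable_poissonMeasure_toNNReal_singleton (x j)]
  refine Finset.prod_congr rfl fun j _ => ?_
  exact lintegral_withDensity_eq_lintegral_mul _
    ((measurable_gammaPDF_uncurry _).comp measurable_prodMk_left)
    (measurable_poissonMeasure_toNNReal_singleton _)

lemma exists_markovKernel_eq_gammaPoisson (hθ : 0 < θ) :
    ∃ κ : Kernel (ι → ℝ) (ι → ℕ), IsMarkovKernel κ ∧
      ∀ y, (∀ j, 0 < y j) → κ y = gammaPoisson θ y := by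
  let clamp : (ι → ℝ) → ι → ℝ := fun y j => if 0 < y j then y j else 1
  have hclamp (y : ι → ℝ) (j : ι) : 0 < clamp y j := by
    dsimp only [clamp]; split_ifs with h; exacts [h, one_pos]
  have hmeas : Measurable fun y => gammaPoisson θ (clamp y) := by
    refine Measure.measurable_of_measurable_singleton fun x => ?_
    simp_rw [gammaPoisson_singleton hθ (hclamp _)]
    refine Finset.measurable_prod _ fun j _ => ?_
    have hmass : Measurable fun s : ℝ =>
        ∫⁻ v, gammaPDF s θ⁻¹ v * poissonMeasure v.toNNReal {x j} :=
      ((measurable_gammaPDF_uncurry θ⁻¹).mul ((measurable_poissonMeasure_toNNReal_singleton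
        (x j)).comp measurable_snd)).lintegral_prod_right'
    exact hmass.comp (Measurable.ite (measurableSet_lt measurable_const (measurable_pi_apply j))
      (measurable_pi_apply j) measurable_const)
  refine ⟨⟨_, hmeas⟩, ⟨fun y => isProbabilityMeasure_gammaPoisson hθ (hclamp y)⟩, fun y hy => ?_⟩
  simp [clamp, hy]

open Complex in
lemma integrable_cexp_sum_mul {μ : Measure (ι → ℕ)} [IsFiniteMeasure μ] {t : ι → ℂ}
    (ht : ∀ j, (t j).re ≤ 0) : Integrable (fun x : ι → ℕ => cexp (∑ j, t j * x j)) μ := by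
  refine Integrable.mono' (integrable_const 1) Measurable.of_discrete.aestronglyMeasurable
    (ae_of_all _ fun x => ?_)
  rw [norm_exp, Real.exp_le_one_iff, re_sum]
  exact Finset.sum_nonpos fun j _ => by
    simpa using mul_nonpos_of_nonpos_of_nonneg (ht j) (Nat.cast_nonneg (x j))

open Complex in
lemma integral_cexp_gammaPoisson (hθ : 0 < θ) {y : ι → ℝ} (hy : ∀ j, 0 < y j) {t : ι → ℂ}
    (ht : ∀ j, (t j).re ≤ 0) :
    ∫ x, cexp (∑ j, t j * x j) ∂gammaPoisson θ y
      = ∏ j, cexp (-(y j : ℂ) * log (1 - θ * (cexp (t j) - 1))) := by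
  have := fun j => isProbabilityMeasure_gammaMeasure (hy j) (inv_pos.2 hθ)
  rw [gammaPoisson, Measure.integral_comp _ (integrable_cexp_sum_mul ht)]
  simp only [Complex.exp_sum, poissonPiKernel_apply]
  simp_rw [integral_fintype_prod_eq_prod (fun j (n : ℕ) => cexp (t j * n)),
    integral_cexp_mul_poissonMeasure]
  rw [integral_fintype_prod_eq_prod fun j (v : ℝ) => cexp ((cexp (t j) - 1) * (v.toNNReal : ℝ))]
  refine Finset.prod_congr rfl fun j _ => ?_
  have hre : (cexp (t j) - 1).re < θ⁻¹ := by
    have : (cexp (t j)).re ≤ 1 :=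
      (re_le_norm _).trans (by rw [norm_exp, Real.exp_le_one_iff]; exact ht j)
    rw [sub_re, one_re]
    linarith [inv_pos.2 hθ]
  rw [integral_congr_ae (ae_nonneg_gammaMeasure.mono fun v hv => by
      rw [Real.coe_toNNReal _ hv]),
    show ∫ v, cexp ((cexp (t j) - 1) * v) ∂gammaMeasure (y j) θ⁻¹
      = complexMGF id (gammaMeasure (y j) θ⁻¹) (cexp (t j) - 1) from rfl,
    complexMGF_gammaMeasure (hy j) (inv_pos.2 hθ) hre]
  push_cast
  rw [div_inv_eq_mul, mul_comm (cexp (t j) - 1)]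

end NegativeBinomial

end ProbabilityTheory

/-- Laplace transform of a negative binomial compound: for `t` with nonpositive real
parts, `∫ e^{⟨t,x⟩} dμ(x) = ∫ ∏ⱼ (1 − θ(e^{tⱼ} − 1))^{−yⱼ} dν(y)`, where the complex
power `b ^ w` is `exp (w * log b)` with `log` the principal branch. -/
theorem laplaceTransform_negBinCompound
    (d : ℕ) (θ : ℝ) (hθ : 0 < θ)
    (ν : Measure (Fin d → ℝ)) [IsProbabilityMeasure ν]
    (hν : ∀ᵐ y ∂ν, ∀ j, 0 < y j)
    (t : Fin d → ℂ) (ht : ∀ j, (t j).re ≤ 0) :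
    ∫ x, Complex.exp (∑ j, t j * (x j : ℂ)) ∂(negBinCompound d θ ν)
      = ∫ y, ∏ j, Complex.exp ((-(y j : ℂ)) *
          Complex.log (1 - (θ : ℂ) * (Complex.exp (t j) - 1))) ∂ν := by
  obtain ⟨κ, hκ, hκ_eq⟩ := exists_markovKernel_eq_gammaPoisson (ι := Fin d) hθ
  have hbind : negBinCompound d θ ν = κ ∘ₘ ν := by
    rw [negBinCompound_eq_bind_gammaPoisson]
    exact Measure.bind_congr_right (hν.mono fun y hy => (hκ_eq y hy).symm)
  rw [hbind, Measure.integral_comp κ (integrable_cexp_sum_mul ht)]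
  refine integral_congr_ae (hν.mono fun y hy => ?_)
  dsimp only
  rw [hκ_eq y hy, integral_cexp_gammaPoisson hθ hy ht]
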